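/- Let n ≥ 5 and let G be a connected graph on n vertices with exactly one cut vertex. Then ε(G) ≤ ε(U_{n,n−1}^l), where ε(U_{n,n−1}^l) = n(n−2)/2 + 3 if n is even and ε(U_{n,n−1}^l) = n(n−1)/2 + 2 if n is odd. -/

import Mathlib

open SimpleGraph

/-- The eccentricity of a vertex: maximum distance to any vertex. -/
noncomputable def ecc {V : Type*} (G : SimpleGraph V) (v : V) : ℕ :=
  ⨆ u, G.dist v u

/-- The total eccentricity index: sum of eccentricities of all vertices. -/
noncomputable def totalEcc {V : Type*} [Fintype V] (G : SimpleGraph V) : ℕ :=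
  ∑ v, ecc G v

/-- A pendant vertex: a vertex of degree one, i.e. with exactly one neighbour. -/
def IsPendant {V : Type*} (G : SimpleGraph V) (v : V) : Prop :=
  ∃! u, G.Adj v u

/-- A cut vertex: a vertex whose removal disconnects the graph. -/
def IsCutVertex {V : Type*} (G : SimpleGraph V) (w : V) : Prop :=
  ¬ (G.induce {v | v ≠ w}).Connected

/-- distance between two subgraphs -/
noncomputable def subgraphDist {V : Type*} (G : SimpleGraph V) (B B' : G.Subgraph) : ℕ :=
  sInf {d | ∃ u ∈ B.verts, ∃ w ∈ B'.verts, G.dist u w = d}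

/-- A 2-connected subgraph: at least two vertices, connected, and no cut vertex. -/
def TwoConn {V : Type*} {G : SimpleGraph V} (H : G.Subgraph) : Prop :=
  2 ≤ H.verts.ncard ∧ H.coe.Connected ∧ ∀ w, ¬ IsCutVertex H.coe w

/-- A block: a maximal 2-connected subgraph. -/
def IsBlock {V : Type*} {G : SimpleGraph V} (H : G.Subgraph) : Prop :=
  TwoConn H ∧ ∀ H' : G.Subgraph, H ≤ H' → TwoConn H' → H' = H

/-- A pendant block: a block containing exactly one cut vertex of `G`. -/
def IsPendantBlock {V : Type*} (G : SimpleGraph V) (H : G.Subgraph) : Prop :=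
  ∃! w, w ∈ H.verts ∧ IsCutVertex G w

/-- `G_{k,l}`: the graph obtained from `G` by attaching two new paths,
with `k` resp. `l` new vertices, at the vertex `v`. -/
def attachTwoPaths {V : Type*} (G : SimpleGraph V) (v : V) (k l : ℕ) :
    SimpleGraph (V ⊕ (Fin k ⊕ Fin l)) :=
  SimpleGraph.fromRel (fun p q =>
    match p, q with
    | .inl x, .inl y => G.Adj x y
    | .inl x, .inr (.inl i) => x = v ∧ i.val = 0
    | .inl x, .inr (.inr i) => x = v ∧ i.val = 0
    | .inr (.inl i), .inr (.inl j) => i.val + 1 = j.val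
    | .inr (.inr i), .inr (.inr j) => i.val + 1 = j.val
    | _, _ => False)

/-- The graph obtained from `H1`, `H2` and the path `P_d = v_1 v_2 … v_d` by identifying
`u ∈ V(H1)`, `v ∈ V(H2)` and `v_1` into a single vertex.  The `Fin (d-1)` part records the
path vertices `v_2, …, v_d`. -/
def glueMid {V1 V2 : Type*} (H1 : SimpleGraph V1) (H2 : SimpleGraph V2)
    (u : V1) (v : V2) (d : ℕ) :
    SimpleGraph (V1 ⊕ ({x : V2 // x ≠ v} ⊕ Fin (d - 1))) :=
  SimpleGraph.fromRel (fun p q =>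
    match p, q with
    | .inl x, .inl y => H1.Adj x y
    | .inl x, .inr (.inl y) => x = u ∧ H2.Adj v y.1
    | .inl x, .inr (.inr i) => x = u ∧ i.val = 0
    | .inr (.inl x), .inr (.inl y) => H2.Adj x.1 y.1
    | .inr (.inr i), .inr (.inr j) => i.val + 1 = j.val
    | _, _ => False)

/-- The graph obtained from `H1`, `H2` and the path `P_d = v_1 v_2 … v_d` by identifying
`u ∈ V(H1)` with `v_1` and `v ∈ V(H2)` with `v_d`.  The `Fin (d-1)` part records the path
vertices `v_2, …, v_d` (the last one being identified with `v`). -/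
def glueEnds {V1 V2 : Type*} (H1 : SimpleGraph V1) (H2 : SimpleGraph V2)
    (u : V1) (v : V2) (d : ℕ) :
    SimpleGraph (V1 ⊕ ({x : V2 // x ≠ v} ⊕ Fin (d - 1))) :=
  SimpleGraph.fromRel (fun p q =>
    match p, q with
    | .inl x, .inl y => H1.Adj x y
    | .inl x, .inr (.inr i) => x = u ∧ i.val = 0
    | .inr (.inl x), .inr (.inl y) => H2.Adj x.1 y.1
    | .inr (.inr i), .inr (.inl y) => i.val + 1 = d - 1 ∧ H2.Adj v y.1
    | .inr (.inr i), .inr (.inr j) => i.val + 1 = j.val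
    | _, _ => False)

/-- `U_{n,g}^l`: the unicyclic graph on `n` vertices obtained by joining one end vertex of
the path `P_{n-g}` to a vertex of the cycle `C_g` by an edge. -/
def UnlGraph (n g : ℕ) : SimpleGraph (Fin (n - g) ⊕ Fin g) :=
  SimpleGraph.fromRel (fun p q =>
    match p, q with
    | .inl i, .inl j => i.val + 1 = j.val
    | .inl i, .inr j => i.val + 1 = n - g ∧ j.val = 0
    | .inr i, .inr j => i.val + 1 = j.val ∨ (i.val = 0 ∧ j.val + 1 = g)
    | _, _ => False)

/-- `U_{n,g}^p`: the unicyclic graph on `n` vertices obtained by attaching `n - g` pendant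
vertices to one vertex of the cycle `C_g`. -/
def UnpGraph (n g : ℕ) : SimpleGraph (Fin g ⊕ Fin (n - g)) :=
  SimpleGraph.fromRel (fun p q =>
    match p, q with
    | .inl i, .inl j => i.val + 1 = j.val ∨ (i.val = 0 ∧ j.val + 1 = g)
    | .inl i, .inr _ => i.val = 0
    | _, _ => False)

/-- The graph obtained by joining the vertex `u` of `H` to the pendant vertex of
`U_{r,g}^l` by an edge. -/
def joinPendant {V : Type*} (H : SimpleGraph V) (u : V) (r g : ℕ) :
    SimpleGraph (V ⊕ (Fin (r - g) ⊕ Fin g)) :=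
  SimpleGraph.fromRel (fun p q =>
    match p, q with
    | .inl x, .inl y => H.Adj x y
    | .inl x, .inr (.inl i) => x = u ∧ i.val = 0
    | .inr a, .inr b => (UnlGraph r g).Adj a b
    | _, _ => False)

/-- `C_{m1,m2}^n` in the case `n = m1 + m2 - 1`: two cycles `C_{m1}` and `C_{m2}`
sharing exactly one vertex (the vertex `0`). -/
def twoCyclesGlued (m1 m2 : ℕ) : SimpleGraph (Fin (m1 + m2 - 1)) :=
  SimpleGraph.fromRel (fun i j =>
    (i.val + 1 = j.val ∧ j.val < m1) ∨ (i.val = 0 ∧ j.val + 1 = m1)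
    ∨ (i.val = 0 ∧ j.val = m1) ∨ (m1 ≤ i.val ∧ i.val + 1 = j.val)
    ∨ (i.val = 0 ∧ j.val + 2 = m1 + m2))

/-- `C_{3,3}^n` for `n > 5`: two triangles `{0,1,2}` and `{n-3,n-2,n-1}` joined by the path
`2, 3, …, n-3` (a path on `n - 4` vertices whose ends are identified with a vertex of each
triangle). -/
def C33 (n : ℕ) : SimpleGraph (Fin n) :=
  SimpleGraph.fromRel (fun i j =>
    (i.val = 0 ∧ j.val = 1) ∨ (i.val = 0 ∧ j.val = 2) ∨ (i.val = 1 ∧ j.val = 2)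
    ∨ (2 ≤ i.val ∧ i.val + 1 = j.val ∧ j.val + 3 ≤ n)
    ∨ (i.val + 3 = n ∧ j.val + 2 = n) ∨ (i.val + 2 = n ∧ j.val + 1 = n)
    ∨ (i.val + 3 = n ∧ j.val + 1 = n))

/-- `T(l, m, d)`: the tree obtained from the path `P_d` by attaching `l` pendant vertices at
one end and `m` pendant vertices at the other end. -/
def Tlmd (l m d : ℕ) : SimpleGraph (Fin d ⊕ (Fin l ⊕ Fin m)) :=
  SimpleGraph.fromRel (fun p q =>
    match p, q with
    | .inl i, .inl j => i.val + 1 = j.val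
    | .inl i, .inr (.inl _) => i.val = 0
    | .inl i, .inr (.inr _) => i.val + 1 = d
    | _, _ => False)

/-- `K_m^n(l_1, …, l_m)`: the graph obtained from the complete graph `K_m` by identifying,
for each `i`, one end vertex of a path on `l i` vertices with the `i`-th vertex of `K_m`.
The vertex `⟨i, 0⟩` is the `i`-th vertex of the complete graph. -/
def Kmn (m : ℕ) (l : Fin m → ℕ) : SimpleGraph ((i : Fin m) × Fin (l i)) :=
  SimpleGraph.fromRel (fun p q =>
    (p.1 = q.1 ∧ p.2.val + 1 = q.2.val) ∨ (p.1 ≠ q.1 ∧ p.2.val = 0 ∧ q.2.val = 0))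

/-- The graph obtained from `H`, `C_{m1}` and `C_{m2}` by identifying the vertex `w` of `H`,
a vertex of `C_{m1}` and a vertex of `C_{m2}` into one vertex. -/
def glueTwoCycles {V : Type*} (H : SimpleGraph V) (w : V) (m1 m2 : ℕ) :
    SimpleGraph (V ⊕ (Fin (m1 - 1) ⊕ Fin (m2 - 1))) :=
  SimpleGraph.fromRel (fun p q =>
    match p, q with
    | .inl x, .inl y => H.Adj x y
    | .inl x, .inr (.inl i) => x = w ∧ (i.val = 0 ∨ i.val + 2 = m1)
    | .inl x, .inr (.inr i) => x = w ∧ (i.val = 0 ∨ i.val + 2 = m2)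
    | .inr (.inl i), .inr (.inl j) => i.val + 1 = j.val
    | .inr (.inr i), .inr (.inr j) => i.val + 1 = j.val
    | _, _ => False)

/-- The graph obtained from `H` and the cycle `C_M` by identifying the vertex `w` of `H`
with one vertex of the cycle. -/
def glueOneCycle {V : Type*} (H : SimpleGraph V) (w : V) (M : ℕ) :
    SimpleGraph (V ⊕ Fin (M - 1)) :=
  SimpleGraph.fromRel (fun p q =>
    match p, q with
    | .inl x, .inl y => H.Adj x y
    | .inl x, .inr i => x = w ∧ (i.val = 0 ∨ i.val + 2 = M)
    | .inr i, .inr j => i.val + 1 = j.val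
    | _, _ => False)

/-!
Let `w` be the unique cut vertex, `n = |V|` and `E = (n + 1) / 2`. A distance sphere around a
vertex `v` with radius strictly between `0` and `ecc v` that misses `w` has at least two vertices,
since a singleton sphere would be a second cut vertex; counting spheres gives `ecc v ≤ E`. In the
same way, in each branch at `w` (a component of `G - w`) every distance level from `w` below the
depth of the branch has at least two vertices.

For a vertex `x` with `ecc x = E`, ball counting shows that each farthest vertex `f` lies in another
branch, so `d(x, f) = d(x, w) + d(w, f)`, and level counting then puts `x` and `f` at the deepest
levels of two branches whose depths add up to `E`. The vertices of eccentricity `E` miss the other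
levels of these two branches, so there are at most `n + 3 - 2E` of them, whence
`ε(G) ≤ n (E - 1) + (n + 3 - 2E) = E (n - 2) + 3`. This equals `ε(U_{n,n-1}^l)`, computed from the
explicit distances in a cycle with a pendant vertex.
-/

open Finset

section Eccentricity

variable {V : Type*} {G : SimpleGraph V}

theorem dist_le_ecc [Finite V] (v u : V) : G.dist v u ≤ ecc G v :=
  le_ciSup (Set.finite_range _).bddAbove u

theorem ecc_le [Nonempty V] {v : V} {k : ℕ} (h : ∀ u, G.dist v u ≤ k) : ecc G v ≤ k :=
  ciSup_le h

theorem exists_dist_eq_ecc [Finite V] (v : V) : ∃ u, G.dist v u = ecc G v :=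
  haveI : Nonempty V := ⟨v⟩
  exists_eq_ciSup_of_finite

end Eccentricity

section Separation

variable {V : Type*} {G : SimpleGraph V} {w x y z : V}

def ReachAvoiding (G : SimpleGraph V) (w x y : V) : Prop :=
  ∃ p : G.Walk x y, w ∉ p.support

namespace ReachAvoiding

theorem refl (hx : x ≠ w) : ReachAvoiding G w x x :=
  ⟨.nil, by simpa using hx.symm⟩

theorem symm (h : ReachAvoiding G w x y) : ReachAvoiding G w y x :=
  let ⟨p, hp⟩ := h
  ⟨p.reverse, by simpa using hp⟩

theorem trans (h : ReachAvoiding G w x y) (h' : ReachAvoiding G w y z) :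
    ReachAvoiding G w x z :=
  let ⟨p, hp⟩ := h
  let ⟨q, hq⟩ := h'
  ⟨p.append q, by simp [Walk.mem_support_append_iff, hp, hq]⟩

theorem adj_left (hxy : G.Adj x y) (hx : x ≠ w) (h : ReachAvoiding G w y z) :
    ReachAvoiding G w x z :=
  let ⟨p, hp⟩ := h
  ⟨.cons hxy p, by simp [hp, hx.symm]⟩

theorem ne_left (h : ReachAvoiding G w x y) : x ≠ w := by
  rintro rfl
  obtain ⟨p, hp⟩ := h
  exact hp p.start_mem_support

theorem ne_right (h : ReachAvoiding G w x y) : y ≠ w :=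
  h.symm.ne_left

end ReachAvoiding

theorem isCutVertex_of_not_reachAvoiding (hx : x ≠ w) (hy : y ≠ w)
    (h : ¬ ReachAvoiding G w x y) : IsCutVertex G w := by
  intro hconn
  obtain ⟨p⟩ := hconn.preconnected ⟨x, hx⟩ ⟨y, hy⟩
  refine h ⟨p.map (Embedding.induce _).toHom, fun hw => ?_⟩
  have hw' : w ∈ (p.map (Embedding.induce {v | v ≠ w}).toHom).support := hw
  rw [Walk.support_map, List.mem_map] at hw'
  obtain ⟨v, -, hv⟩ := hw'
  exact v.2 hv

theorem IsCutVertex.exists_not_reachAvoiding (h : IsCutVertex G w) (hx : x ≠ w) :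
    ∃ y, y ≠ w ∧ ¬ ReachAvoiding G w x y := by
  by_contra! hall
  refine h ((connected_iff_exists_forall_reachable _).2 ⟨⟨x, hx⟩, fun y => ?_⟩)
  obtain ⟨p, hp⟩ := hall y y.2
  exact (p.induce {v | v ≠ w} fun v hv hvw => hp (hvw ▸ hv)).reachable

theorem dist_eq_add_of_not_reachAvoiding (hG : G.Connected) (h : ¬ ReachAvoiding G w x y) :
    G.dist x y = G.dist x w + G.dist w y := by
  classical
  refine le_antisymm hG.dist_triangle ?_
  obtain ⟨p, hp⟩ := hG.exists_walk_length_eq_dist x y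
  have hw : w ∈ p.support := by
    by_contra hw
    exact h ⟨p, hw⟩
  calc G.dist x w + G.dist w y ≤ (p.takeUntil w hw).length + (p.dropUntil w hw).length :=
        add_le_add (dist_le _) (dist_le _)
    _ = G.dist x y := by rw [← Walk.length_append, p.take_spec hw, hp]

theorem exists_mem_support_dist_eq (c : V) {a b : V} (p : G.Walk a b) {s : ℕ} (hs : 0 < s)
    (hb : G.dist c b < s) (ha : s ≤ G.dist c a) :
    ∃ u ∈ p.support, G.dist c u = s ∧ ReachAvoiding G c a u := by
  induction p with
  | nil => omega
  | @cons a a' b hadj p ih =>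
    have hac : a ≠ c := by
      rintro rfl
      simp at ha
      omega
    by_cases ha' : s ≤ G.dist c a'
    · obtain ⟨u, hu, hdu, hu'⟩ := ih hb ha'
      exact ⟨u, by simp [hu], hdu, hu'.adj_left hadj hac⟩
    · have := hadj.diff_dist_adj (u := c)
      exact ⟨a, by simp, by omega, .refl hac⟩

end Separation

theorem two_mul_card_le_sum_add_card {ι : Type*} (s T : Finset ι) (f : ι → ℕ)
    (h₁ : ∀ i ∈ s, 1 ≤ f i) (h₂ : ∀ i ∈ s, i ∉ T → 2 ≤ f i) :
    2 * #s ≤ ∑ i ∈ s, f i + #T := by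
  classical
  calc 2 * #s = ∑ _i ∈ s, 2 := by rw [sum_const, smul_eq_mul, mul_comm]
    _ ≤ ∑ i ∈ s, (f i + if i ∈ T then 1 else 0) := sum_le_sum fun i hi => by
        have := h₁ i hi
        split_ifs with hT
        · omega
        · have := h₂ i hi hT
          omega
    _ = ∑ i ∈ s, f i + #{i ∈ s | i ∈ T} := by rw [sum_add_distrib, sum_boole, Nat.cast_id]
    _ ≤ ∑ i ∈ s, f i + #T := by
        gcongr
        exact fun i hi => (mem_filter.1 hi).2

section Spheres

variable {V : Type*} [Fintype V] {G : SimpleGraph V} {w v : V}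

noncomputable def distSphere (G : SimpleGraph V) (v : V) (t : ℕ) : Finset V := {u | G.dist v u = t}

noncomputable def distBall (G : SimpleGraph V) (v : V) (r : ℕ) : Finset V := {u | G.dist v u ≤ r}

@[simp] theorem mem_distSphere {t : ℕ} {u : V} : u ∈ distSphere G v t ↔ G.dist v u = t := by
  simp [distSphere]

@[simp] theorem mem_distBall {r : ℕ} {u : V} : u ∈ distBall G v r ↔ G.dist v u ≤ r := by
  simp [distBall]

theorem card_distBall (v : V) (r : ℕ) :
    #(distBall G v r) = ∑ t ∈ range (r + 1), #(distSphere G v t) := by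
  rw [card_eq_sum_card_fiberwise (f := G.dist v) (t := range (r + 1)) fun u hu => by
    simpa [Nat.lt_succ_iff] using hu]
  refine sum_congr rfl fun t ht => congrArg card ?_
  ext u
  simp only [mem_filter, mem_distBall, mem_distSphere, mem_range] at ht ⊢
  omega

theorem distSphere_nonempty (hG : G.Connected) {t : ℕ} (ht : t ≤ ecc G v) :
    (distSphere G v t).Nonempty := by
  rcases Nat.eq_zero_or_pos t with rfl | ht0
  · exact ⟨v, by simp⟩
  obtain ⟨f, hf⟩ := exists_dist_eq_ecc (G := G) v
  obtain ⟨u, -, hu, -⟩ := exists_mem_support_dist_eq v (hG f v).some ht0 (by simpa) (hf ▸ ht)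
  exact ⟨u, mem_distSphere.2 hu⟩

theorem two_mul_add_one_le_card_distBall (hG : G.Connected) {r : ℕ} (hr : r ≤ ecc G v)
    (T : Finset ℕ) (hT : ∀ t ∈ Icc 1 r, t ∉ T → 1 < #(distSphere G v t)) :
    2 * r + 1 ≤ #(distBall G v r) + #T := by
  have h := two_mul_card_le_sum_add_card (range (r + 1)) (insert 0 T) (fun t => #(distSphere G v t))
    (fun t ht => card_pos.2 <|
      distSphere_nonempty hG ((Nat.lt_succ_iff.1 (mem_range.1 ht)).trans hr))
    (fun t ht htT => hT t (mem_Icc.2 ⟨Nat.pos_of_ne_zero fun h => htT (h ▸ mem_insert_self 0 T),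
      Nat.lt_succ_iff.1 (mem_range.1 ht)⟩) fun h => htT (mem_insert_of_mem h))
  rw [card_range, ← card_distBall] at h
  have := card_insert_le 0 T
  omega

variable (hG : G.Connected) (huniq : ∀ y, IsCutVertex G y → y = w)
include hG huniq

theorem one_lt_card_distSphere {t : ℕ} (ht : 0 < t) (hte : t < ecc G v)
    (htw : G.dist v w ≠ t) : 1 < #(distSphere G v t) := by
  rcases (distSphere_nonempty hG hte.le).exists_eq_singleton_or_nontrivial with ⟨y, hy⟩ | h
  · exfalso
    obtain ⟨f, hf⟩ := exists_dist_eq_ecc (G := G) v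
    have hmem : ∀ {u}, G.dist v u = t → u = y := fun hu => by
      simpa [hy] using mem_distSphere.2 hu
    have hyt : G.dist v y = t := mem_distSphere.1 (hy ▸ mem_singleton_self y)
    have hcut : IsCutVertex G y := by
      refine isCutVertex_of_not_reachAvoiding (x := f) (y := v) ?_ ?_ fun ⟨p, hp⟩ => ?_
      · rintro rfl
        omega
      · rintro rfl
        simp at hyt
        omega
      · obtain ⟨u, hu, hdu, -⟩ := exists_mem_support_dist_eq v p ht (by simpa) (hf ▸ hte.le)
        exact hp (hmem hdu ▸ hu)
    exact htw (huniq y hcut ▸ hyt)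
  · exact one_lt_card_iff_nontrivial.2 h

theorem two_mul_ecc_le_card_add_one (v : V) : 2 * ecc G v ≤ Fintype.card V + 1 := by
  have h := two_mul_add_one_le_card_distBall hG (v := v) le_rfl {ecc G v, G.dist v w}
    fun t ht htT => one_lt_card_distSphere hG huniq (mem_Icc.1 ht).1
      (lt_of_le_of_ne (mem_Icc.1 ht).2 fun h => htT (by simp [h]))
      fun h => htT (by simp [← h])
  have hball : distBall G v (ecc G v) = univ := eq_univ_of_forall fun u => by simp [dist_le_ecc]
  rw [hball, card_univ] at h
  have := card_le_two (a := ecc G v) (b := G.dist v w)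
  omega

theorem two_mul_add_one_le_card_distBall_of_lt {r : ℕ} (hr : r < ecc G v)
    (hrw : r < G.dist v w) : 2 * r + 1 ≤ #(distBall G v r) := by
  simpa using two_mul_add_one_le_card_distBall hG (v := v) hr.le ∅ fun t ht _ => by
    obtain ⟨ht₁, htr⟩ := mem_Icc.1 ht
    exact one_lt_card_distSphere hG huniq ht₁ (by omega) (by omega)

/-- The sphere through `w` contains a second vertex: one on a walk avoiding `w` from `f`
back to `x`. -/
theorem two_mul_dist_add_one_le_card_distBall {x f : V} (hxf : ReachAvoiding G w x f)
    (hf : G.dist x f = ecc G x) (hlt : G.dist x w < ecc G x) :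
    2 * G.dist x w + 1 ≤ #(distBall G x (G.dist x w)) := by
  have ha : 0 < G.dist x w := hG.pos_dist_of_ne hxf.ne_left
  simpa using two_mul_add_one_le_card_distBall hG (v := x) hlt.le ∅ fun t ht _ => by
    obtain ⟨ht₁, hta⟩ := mem_Icc.1 ht
    rcases hta.lt_or_eq with hta | rfl
    · exact one_lt_card_distSphere hG huniq ht₁ (by omega) (by omega)
    · obtain ⟨p, hp⟩ := hxf.symm
      obtain ⟨u, hu, hdu, -⟩ := exists_mem_support_dist_eq x p ha (by simpa) (by omega)
      exact one_lt_card.2 ⟨w, by simp, u, by simpa using hdu, fun h => hp (h ▸ hu)⟩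

end Spheres

theorem disjoint_distBall {V : Type*} [Fintype V] {G : SimpleGraph V} (hG : G.Connected)
    {x y : V} {r s : ℕ} (h : r + s < G.dist x y) : Disjoint (distBall G x r) (distBall G y s) :=
  disjoint_left.2 fun u hx hy => by
    have := hG.dist_triangle (u := x) (v := u) (w := y)
    rw [SimpleGraph.dist_comm (u := u)] at this
    simp only [mem_distBall] at hx hy
    omega

section Branches

variable {V : Type*} [Fintype V] {G : SimpleGraph V} {w x y : V}

open Classical in
noncomputable def branch (G : SimpleGraph V) (w x : V) : Finset V :=
  {u | ReachAvoiding G w x u}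

noncomputable def branchDepth (G : SimpleGraph V) (w x : V) : ℕ :=
  (branch G w x).sup (G.dist w)

@[simp] theorem mem_branch {u : V} : u ∈ branch G w x ↔ ReachAvoiding G w x u := by
  simp [branch]

theorem branchDepth_congr (h : ReachAvoiding G w x y) : branchDepth G w x = branchDepth G w y := by
  have : branch G w x = branch G w y := by
    ext u
    exact ⟨fun hu => mem_branch.2 (h.symm.trans (mem_branch.1 hu)),
      fun hu => mem_branch.2 (h.trans (mem_branch.1 hu))⟩
  rw [branchDepth, this, branchDepth]

theorem dist_le_branchDepth {u : V} (hu : u ∈ branch G w x) : G.dist w u ≤ branchDepth G w x :=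
  le_sup hu

theorem exists_dist_eq_branchDepth (hx : x ≠ w) :
    ∃ z ∈ branch G w x, G.dist w z = branchDepth G w x :=
  let ⟨z, hz, hzd⟩ := exists_mem_eq_sup _ ⟨x, mem_branch.2 (.refl hx)⟩ (G.dist w)
  ⟨z, hz, hzd.symm⟩

theorem card_branch_add_card_branch_lt (h : ¬ ReachAvoiding G w x y) :
    #(branch G w x) + #(branch G w y) < Fintype.card V := by
  classical
  have hdisj : Disjoint (branch G w x) (branch G w y) := disjoint_left.2 fun u hx hy =>
    h ((mem_branch.1 hx).trans (mem_branch.1 hy).symm)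
  have hsub : branch G w x ∪ branch G w y ⊆ univ.erase w := fun u hu => by
    rcases mem_union.1 hu with hu | hu <;>
      exact mem_erase.2 ⟨(mem_branch.1 hu).ne_right, mem_univ u⟩
  have := card_le_card hsub
  rw [card_union_of_disjoint hdisj, card_erase_of_mem (mem_univ w), card_univ] at this
  have := Fintype.card_pos_iff.2 ⟨w⟩
  omega

theorem branchDepth_pos (hG : G.Connected) (hx : x ≠ w) : 0 < branchDepth G w x :=
  (hG.pos_dist_of_ne hx.symm).trans_le (dist_le_branchDepth (mem_branch.2 (.refl hx)))

variable (hG : G.Connected) (huniq : ∀ y, IsCutVertex G y → y = w)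
include hG huniq

theorem one_lt_card_branch_level (hx : x ≠ w) {s : ℕ} (hs : 0 < s)
    (hsd : s < branchDepth G w x) : 1 < #{u ∈ branch G w x | G.dist w u = s} := by
  obtain ⟨z, hz, hzd⟩ := exists_dist_eq_branchDepth (G := G) hx
  have hcross : ∀ p : G.Walk z w, ∃ u ∈ p.support, u ∈ {u ∈ branch G w x | G.dist w u = s} :=
    fun p => by
      obtain ⟨u, hu, hdu, hzu⟩ := exists_mem_support_dist_eq w p hs (by simpa) (hzd ▸ hsd.le)
      exact ⟨u, hu, mem_filter.2 ⟨mem_branch.2 ((mem_branch.1 hz).trans hzu), hdu⟩⟩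
  obtain ⟨u₀, -, hu₀⟩ := hcross (hG z w).some
  rcases Finset.Nonempty.exists_eq_singleton_or_nontrivial ⟨u₀, hu₀⟩ with ⟨y, hy⟩ | h
  · exfalso
    have hys := (mem_filter.1 (hy ▸ mem_singleton_self y : y ∈ _))
    have hcut : IsCutVertex G y := by
      refine isCutVertex_of_not_reachAvoiding (x := z) (y := w) ?_ ?_ fun ⟨p, hp⟩ => ?_
      · rintro rfl
        omega
      · rintro rfl
        exact (mem_branch.1 hys.1).ne_right rfl
      · obtain ⟨u, hu, hus⟩ := hcross p
        rw [hy, mem_singleton] at hus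
        exact hp (hus ▸ hu)
    exact (mem_branch.1 hys.1).ne_right (huniq y hcut)
  · exact one_lt_card_iff_nontrivial.2 h

theorem two_mul_pred_branchDepth_le_card_filter_lt (hx : x ≠ w) :
    2 * (branchDepth G w x - 1) ≤ #{u ∈ branch G w x | G.dist w u < branchDepth G w x} := by
  set N := branchDepth G w x
  set B := branch G w x
  have h := two_mul_card_le_sum_add_card (Ico 1 N) ∅
    (fun s => #{u ∈ B | G.dist w u = s}) (fun s hs => (one_lt_card_branch_level hG huniq hx
      (mem_Ico.1 hs).1 (mem_Ico.1 hs).2).le) fun s hs _ =>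
        one_lt_card_branch_level hG huniq hx (mem_Ico.1 hs).1 (mem_Ico.1 hs).2
  rw [Nat.card_Ico, card_empty, add_zero] at h
  refine h.trans_eq ?_
  rw [card_eq_sum_card_fiberwise (f := G.dist w) (t := Ico 1 N) fun u hu => ?_]
  · refine sum_congr rfl fun s hs => congrArg card ?_
    ext u
    simp only [mem_filter]
    have := (mem_Ico.1 hs).2
    exact ⟨fun h => ⟨⟨h.1, h.2 ▸ this⟩, h.2⟩, fun h => ⟨h.1.1, h.2⟩⟩
  · obtain ⟨hu, hlt⟩ := mem_filter.1 hu
    exact mem_Ico.2 ⟨hG.pos_dist_of_ne (mem_branch.1 hu).ne_right.symm, hlt⟩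

theorem two_mul_branchDepth_le_card_branch_add_one (hx : x ≠ w) :
    2 * branchDepth G w x ≤ #(branch G w x) + 1 := by
  have := two_mul_pred_branchDepth_le_card_filter_lt hG huniq hx
  obtain ⟨z, hz, hzd⟩ := exists_dist_eq_branchDepth (G := G) hx
  have : #{u ∈ branch G w x | G.dist w u < branchDepth G w x} < #(branch G w x) :=
    card_lt_card (filter_ssubset.2 ⟨z, hz, hzd.not_lt⟩)
  omega

theorem two_mul_branchDepth_add_le (h : ¬ ReachAvoiding G w x y) (hx : x ≠ w) (hy : y ≠ w) :
    2 * (branchDepth G w x + branchDepth G w y) ≤ Fintype.card V + 1 := by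
  have := two_mul_branchDepth_le_card_branch_add_one hG huniq hx
  have := two_mul_branchDepth_le_card_branch_add_one hG huniq hy
  have := card_branch_add_card_branch_lt h
  omega

end Branches

section UniqueCutVertex

variable {V : Type*} [Fintype V] {G : SimpleGraph V} {w x f : V}
  (hG : G.Connected) (huniq : ∀ y, IsCutVertex G y → y = w) (hcut : IsCutVertex G w)
include hG huniq hcut

theorem two_mul_ecc_add_one_le_card_of_isCutVertex : 2 * ecc G w + 1 ≤ Fintype.card V := by
  obtain ⟨z, hz⟩ := exists_dist_eq_ecc (G := G) w
  rcases eq_or_ne z w with rfl | hzw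
  · have := Fintype.card_pos_iff.2 ⟨z⟩
    simp at hz
    omega
  obtain ⟨c, hcw, hzc⟩ := hcut.exists_not_reachAvoiding hzw
  have := two_mul_branchDepth_add_le hG huniq hzc hzw hcw
  have := hz ▸ dist_le_branchDepth (mem_branch.2 (.refl hzw))
  have := branchDepth_pos hG hcw
  omega

/-- If `ecc G x` is at least `n / 2`, every farthest vertex `f` from `x` lies in another
branch at `w`: otherwise the balls of radii `a = d(x, w)` around `x` and `ecc G x - 1 - a`
around `f` would be disjoint, contain at least `2 * ecc G x` vertices together, and miss the
vertices of every other branch. -/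
theorem not_reachAvoiding_of_dist_eq_ecc (hx : Fintype.card V ≤ 2 * ecc G x)
    (hf : G.dist x f = ecc G x) : ¬ ReachAvoiding G w x f := by
  classical
  intro hxf
  have hwe := two_mul_ecc_add_one_le_card_of_isCutVertex hG huniq hcut
  have ha : G.dist x w ≤ ecc G w := SimpleGraph.dist_comm (G := G) (u := w) ▸ dist_le_ecc w x
  have hfw : ecc G x ≤ G.dist x w + G.dist f w :=
    SimpleGraph.dist_comm (G := G) (u := f) ▸ hf ▸ hG.dist_triangle
  have hef : ecc G x ≤ ecc G f := hf ▸ SimpleGraph.dist_comm (G := G) ▸ dist_le_ecc f x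
  obtain ⟨u₀, hu₀w, hxu₀⟩ := hcut.exists_not_reachAvoiding hxf.ne_left
  have hxu₀' := dist_eq_add_of_not_reachAvoiding hG hxu₀
  have hfu₀ := dist_eq_add_of_not_reachAvoiding hG fun h => hxu₀ (hxf.trans h)
  have hu₀ : 0 < G.dist w u₀ := hG.pos_dist_of_ne hu₀w.symm
  have hBx := two_mul_dist_add_one_le_card_distBall hG huniq hxf hf (by omega)
  have hBf := two_mul_add_one_le_card_distBall_of_lt hG huniq (v := f)
    (r := ecc G x - 1 - G.dist x w) (by omega) (by omega)
  have hsub : distBall G x (G.dist x w) ∪ distBall G f (ecc G x - 1 - G.dist x w) ⊆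
      univ.erase u₀ := fun u hu => by
    refine mem_erase.2 ⟨?_, mem_univ u⟩
    rintro rfl
    rcases mem_union.1 hu with hu | hu <;> simp only [mem_distBall] at hu <;> omega
  have := card_le_card hsub
  rw [card_union_of_disjoint (disjoint_distBall hG (by omega)), card_erase_of_mem (mem_univ u₀),
    card_univ] at this
  omega

theorem ne_of_ecc_eq (hx : ecc G x = (Fintype.card V + 1) / 2) : x ≠ w := by
  rintro rfl
  have := two_mul_ecc_add_one_le_card_of_isCutVertex hG huniq hcut
  omega

theorem exists_branchDepth_add_eq (hx : ecc G x = (Fintype.card V + 1) / 2) :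
    ∃ f, f ≠ w ∧ ¬ ReachAvoiding G w x f ∧ G.dist w x = branchDepth G w x ∧
      branchDepth G w x + branchDepth G w f = (Fintype.card V + 1) / 2 := by
  obtain ⟨f, hf⟩ := exists_dist_eq_ecc (G := G) x
  have hxf := not_reachAvoiding_of_dist_eq_ecc hG huniq hcut (by omega) hf
  have hxw := ne_of_ecc_eq hG huniq hcut hx
  have hfw : f ≠ w := fun h => by
    have := two_mul_ecc_add_one_le_card_of_isCutVertex hG huniq hcut
    have := dist_le_ecc (G := G) w x
    rw [h, SimpleGraph.dist_comm] at hf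
    omega
  have hsum := dist_eq_add_of_not_reachAvoiding hG hxf
  rw [SimpleGraph.dist_comm (u := x) (v := w)] at hsum
  have := two_mul_branchDepth_add_le hG huniq hxf hxw hfw
  have := dist_le_branchDepth (G := G) (mem_branch.2 (.refl hxw))
  have := dist_le_branchDepth (G := G) (mem_branch.2 (.refl hfw))
  exact ⟨f, hfw, hxf, by omega, by omega⟩

theorem branchDepth_le_dist_of_ecc_eq (hx : ecc G x = (Fintype.card V + 1) / 2)
    (hxy : x ∈ branch G w y) : branchDepth G w y ≤ G.dist w x := by
  obtain ⟨-, -, -, hdx, -⟩ := exists_branchDepth_add_eq hG huniq hcut hx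
  rw [hdx, branchDepth_congr (mem_branch.1 hxy)]

theorem card_filter_ecc_eq_add_le :
    #{v | ecc G v = (Fintype.card V + 1) / 2} + 2 * ((Fintype.card V + 1) / 2) ≤
      Fintype.card V + 3 := by
  classical
  set S : Finset V := {v | ecc G v = (Fintype.card V + 1) / 2}
  rcases S.eq_empty_or_nonempty with hS | ⟨x, hx⟩
  · rw [hS, card_empty]
    have := two_mul_ecc_add_one_le_card_of_isCutVertex hG huniq hcut
    omega
  replace hx := (mem_filter.1 hx).2
  have hxw := ne_of_ecc_eq hG huniq hcut hx
  obtain ⟨f, hfw, hxf, hdx, hsum⟩ := exists_branchDepth_add_eq hG huniq hcut hx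
  have h₀ := two_mul_pred_branchDepth_le_card_filter_lt hG huniq hxw
  have h₁ := two_mul_pred_branchDepth_le_card_filter_lt hG huniq hfw
  have := branchDepth_pos hG hxw
  have := branchDepth_pos hG hfw
  set A₀ := {u ∈ branch G w x | G.dist w u < branchDepth G w x}
  set A₁ := {u ∈ branch G w f | G.dist w u < branchDepth G w f}
  have hSA : ∀ y, Disjoint S {u ∈ branch G w y | G.dist w u < branchDepth G w y} :=
    fun y => disjoint_left.2 fun v hv hvy => (mem_filter.1 hvy).2.not_ge
      (branchDepth_le_dist_of_ecc_eq hG huniq hcut (mem_filter.1 hv).2 (mem_filter.1 hvy).1)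
  have hS₀ : Disjoint S A₀ := hSA x
  have hS₁ : Disjoint S A₁ := hSA f
  have h₀₁ : Disjoint A₀ A₁ := disjoint_left.2 fun u hu₀ hu₁ =>
    hxf ((mem_branch.1 (mem_filter.1 hu₀).1).trans (mem_branch.1 (mem_filter.1 hu₁).1).symm)
  have hsub : S ∪ A₀ ∪ A₁ ⊆ univ.erase w := fun u hu => by
    refine mem_erase.2 ⟨?_, mem_univ u⟩
    rintro rfl
    rcases mem_union.1 hu with hu | hu
    · rcases mem_union.1 hu with hu | hu
      · exact ne_of_ecc_eq hG huniq hcut (mem_filter.1 hu).2 rfl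
      · exact (mem_branch.1 (mem_filter.1 hu).1).ne_right rfl
    · exact (mem_branch.1 (mem_filter.1 hu).1).ne_right rfl
  have := card_le_card hsub
  rw [card_union_of_disjoint (disjoint_union_left.2 ⟨hS₁, h₀₁⟩), card_union_of_disjoint hS₀,
    card_erase_of_mem (mem_univ w), card_univ] at this
  omega

theorem totalEcc_le (hn : 2 ≤ Fintype.card V) :
    totalEcc G ≤ (Fintype.card V + 1) / 2 * (Fintype.card V - 2) + 3 := by
  classical
  have hS := card_filter_ecc_eq_add_le hG huniq hcut
  have hecc := two_mul_ecc_le_card_add_one hG huniq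
  generalize hE : (Fintype.card V + 1) / 2 = E at hS ⊢
  have hsum : totalEcc G ≤ Fintype.card V * (E - 1) + #{v | ecc G v = E} :=
    calc totalEcc G ≤ ∑ v, (E - 1 + if ecc G v = E then 1 else 0) := sum_le_sum fun v _ => by
          have := hecc v
          split_ifs <;> omega
      _ = _ := by rw [sum_add_distrib, sum_const, card_univ, smul_eq_mul, sum_boole, Nat.cast_id]
  have hE₁ : 1 ≤ E := by omega
  generalize #{v | ecc G v = E} = s at hS hsum
  generalize Fintype.card V = n at hS hsum hn ⊢
  obtain ⟨m, rfl⟩ : ∃ m, n = m + 2 := ⟨n - 2, by omega⟩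
  obtain ⟨E, rfl⟩ : ∃ E', E = E' + 1 := ⟨E - 1, by omega⟩
  simp only [Nat.add_sub_cancel] at hsum ⊢
  nlinarith

end UniqueCutVertex

theorem dist_eq_of_potential {V : Type*} {G : SimpleGraph V} (D : V → V → ℕ)
    (hrefl : ∀ u, D u u = 0) (hzero : ∀ u v, D u v = 0 → u = v)
    (hlip : ∀ u a b, G.Adj a b → D u b ≤ D u a + 1)
    (hdesc : ∀ u v, 0 < D u v → ∃ v', G.Adj v' v ∧ D u v' + 1 = D u v) (u v : V) :
    G.dist u v = D u v := by
  have hwalk : ∀ k v, D u v = k → ∃ p : G.Walk u v, p.length = k := by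
    intro k
    induction k with
    | zero =>
      intro v hv
      obtain rfl := hzero u v hv
      exact ⟨.nil, rfl⟩
    | succ k ih =>
      intro v hv
      obtain ⟨v', hadj, hv'⟩ := hdesc u v (by omega)
      obtain ⟨p, hp⟩ := ih v' (by omega)
      exact ⟨p.concat hadj, by rw [Walk.length_concat, hp]⟩
  have hlow : ∀ {a b} (p : G.Walk a b), D u b ≤ D u a + p.length := by
    intro a b p
    induction p with
    | nil => simp
    | cons hadj p ih =>
      have := hlip u _ _ hadj
      rw [Walk.length_cons]
      omega
  obtain ⟨p, hp⟩ := hwalk _ v rfl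
  refine le_antisymm (hp ▸ dist_le p) ?_
  obtain ⟨q, hq⟩ := p.reachable.exists_walk_length_eq_dist
  have := hlow q
  rw [hrefl] at this
  omega

section Unicyclic

def cycDist (g i j : ℕ) : ℕ := min (Nat.dist i j) (g - Nat.dist i j)

theorem exists_cycDist_step {g : ℕ} (hg : 3 ≤ g) {i j : Fin g} (hij : i ≠ j) :
    ∃ k : Fin g, cycDist g k j = 1 ∧ cycDist g i k + 1 = cycDist g i j := by
  have := i.isLt
  have := j.isLt
  have hne : (i : ℕ) ≠ j := Fin.val_ne_of_ne hij
  unfold cycDist Nat.dist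
  rcases Nat.lt_or_gt_of_ne hne with h | h
  · by_cases hs : j - i ≤ g - (j - i)
    · exact ⟨⟨j - 1, by omega⟩, by dsimp only; omega, by dsimp only; omega⟩
    by_cases hj : j + 1 < g
    · exact ⟨⟨j + 1, hj⟩, by dsimp only; omega, by dsimp only; omega⟩
    · exact ⟨⟨0, by omega⟩, by dsimp only; omega, by dsimp only; omega⟩
  · by_cases hs : i - j ≤ g - (i - j)
    · exact ⟨⟨j + 1, by omega⟩, by dsimp only; omega, by dsimp only; omega⟩
    by_cases hj : 0 < (j : ℕ)
    · exact ⟨⟨j - 1, by omega⟩, by dsimp only; omega, by dsimp only; omega⟩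
    · exact ⟨⟨g - 1, by omega⟩, by dsimp only; omega, by dsimp only; omega⟩

variable {n : ℕ}

/-- Distances in `UnlGraph n (n - 1)`, whose pendant vertex `.inl 0` (the only vertex of
`Fin (n - (n - 1))`) is attached to the cycle vertex `.inr 0`. -/
def unlDist (n : ℕ) : Fin (n - (n - 1)) ⊕ Fin (n - 1) → Fin (n - (n - 1)) ⊕ Fin (n - 1) → ℕ
  | .inl _, .inl _ => 0
  | .inl _, .inr j => cycDist (n - 1) 0 j + 1
  | .inr i, .inl _ => cycDist (n - 1) i 0 + 1
  | .inr i, .inr j => cycDist (n - 1) i j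

theorem unlGraph_adj_iff (hn : 4 ≤ n) {a b : Fin (n - (n - 1)) ⊕ Fin (n - 1)} :
    (UnlGraph n (n - 1)).Adj a b ↔ unlDist n a b = 1 := by
  rcases a with i | i <;> rcases b with j | j <;> have := i.isLt <;> have := j.isLt <;>
    simp only [UnlGraph, fromRel_adj, ne_eq, Sum.inl.injEq, Sum.inr.injEq, reduceCtorEq,
      not_false_eq_true, true_and, or_false, false_or, unlDist, cycDist, Nat.dist, Fin.ext_iff,
      zero_ne_one, iff_false] <;>
    omega

theorem unlDist_self (u : Fin (n - (n - 1)) ⊕ Fin (n - 1)) : unlDist n u u = 0 := by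
  rcases u with u | u <;> simp [unlDist, cycDist]

theorem eq_of_unlDist_eq_zero (hn : 4 ≤ n) {u v : Fin (n - (n - 1)) ⊕ Fin (n - 1)}
    (h : unlDist n u v = 0) : u = v := by
  rcases u with u | u <;> rcases v with v | v <;> have := u.isLt <;> have := v.isLt <;>
    simp only [unlDist, cycDist, Nat.dist, Sum.inl.injEq, Sum.inr.injEq, reduceCtorEq,
      Fin.ext_iff] at h ⊢ <;> omega

theorem unlDist_triangle (u a b : Fin (n - (n - 1)) ⊕ Fin (n - 1)) :
    unlDist n u b ≤ unlDist n u a + unlDist n a b := by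
  rcases u with u | u <;> rcases a with a | a <;> rcases b with b | b <;>
    have := u.isLt <;> have := a.isLt <;> have := b.isLt <;>
    simp only [unlDist, cycDist, Nat.dist] <;> omega

theorem exists_unlDist_step (hn : 4 ≤ n) {u v : Fin (n - (n - 1)) ⊕ Fin (n - 1)}
    (h : 0 < unlDist n u v) : ∃ v', unlDist n v' v = 1 ∧ unlDist n u v' + 1 = unlDist n u v := by
  have hg : 3 ≤ n - 1 := by omega
  rcases u with i | i <;> rcases v with j | j
  · simp [unlDist] at h
  · by_cases hj : (j : ℕ) = 0
    · exact ⟨.inl i, by simp [unlDist, cycDist, hj], by simp [unlDist, cycDist, hj]⟩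
    obtain ⟨k, hkj, hk⟩ := exists_cycDist_step hg (i := ⟨0, by omega⟩) (j := j)
      fun h => hj (by simp [← h])
    exact ⟨.inr k, hkj, by simp only [unlDist] at hk ⊢; omega⟩
  · exact ⟨.inr ⟨0, by omega⟩, by simp [unlDist, cycDist], by simp [unlDist]⟩
  · obtain ⟨k, hkj, hk⟩ := exists_cycDist_step hg (i := i) (j := j) fun hij => by
      simp [unlDist, cycDist, hij] at h
    exact ⟨.inr k, hkj, hk⟩

theorem dist_unlGraph (hn : 4 ≤ n) (u v : Fin (n - (n - 1)) ⊕ Fin (n - 1)) :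
    (UnlGraph n (n - 1)).dist u v = unlDist n u v :=
  dist_eq_of_potential _ unlDist_self (fun _ _ => eq_of_unlDist_eq_zero hn)
    (fun u a b hab => (unlDist_triangle u a b).trans_eq (by rw [(unlGraph_adj_iff hn).1 hab]))
    (fun _ _ h => let ⟨v', hv'v, hv'⟩ := exists_unlDist_step hn h
      ⟨v', (unlGraph_adj_iff hn).2 hv'v, hv'⟩) u v

theorem ecc_unlGraph_inl (hn : 4 ≤ n) (i : Fin (n - (n - 1))) :
    ecc (UnlGraph n (n - 1)) (.inl i) = (n - 1) / 2 + 1 := by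
  have : Nonempty (Fin (n - (n - 1)) ⊕ Fin (n - 1)) := ⟨.inl i⟩
  refine le_antisymm (ecc_le fun u => ?_) ?_
  · rw [dist_unlGraph hn]
    rcases u with j | j <;> have := j.isLt <;> simp only [unlDist, cycDist, Nat.dist] <;> omega
  · have := dist_le_ecc (G := UnlGraph n (n - 1)) (.inl i) (.inr ⟨(n - 1) / 2, by omega⟩)
    rw [dist_unlGraph hn] at this
    simp only [unlDist, cycDist, Nat.dist] at this
    omega

theorem ecc_unlGraph_inr (hn : 4 ≤ n) (j : Fin (n - 1)) :
    ecc (UnlGraph n (n - 1)) (.inr j) = max ((n - 1) / 2) (cycDist (n - 1) 0 j + 1) := by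
  have : Nonempty (Fin (n - (n - 1)) ⊕ Fin (n - 1)) := ⟨.inr j⟩
  have := j.isLt
  refine le_antisymm (ecc_le fun u => ?_) (max_le ?_ ?_)
  · rw [dist_unlGraph hn]
    rcases u with k | k <;> have := k.isLt <;> simp only [unlDist, cycDist, Nat.dist] <;> omega
  · obtain ⟨k, hk⟩ : ∃ k : Fin (n - 1), cycDist (n - 1) j k = (n - 1) / 2 := by
      by_cases hj : j + (n - 1) / 2 < n - 1
      · exact ⟨⟨j + (n - 1) / 2, hj⟩, by simp only [cycDist, Nat.dist]; omega⟩
      · exact ⟨⟨j + (n - 1) / 2 - (n - 1), by omega⟩, by simp only [cycDist, Nat.dist]; omega⟩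
    have := dist_le_ecc (G := UnlGraph n (n - 1)) (.inr j) (.inr k)
    rwa [dist_unlGraph hn, unlDist, hk] at this
  · have := dist_le_ecc (G := UnlGraph n (n - 1)) (.inr j) (.inl ⟨0, by omega⟩)
    rw [dist_unlGraph hn] at this
    simp only [unlDist, cycDist, Nat.dist] at this ⊢
    omega

theorem sum_max_cycDist {g : ℕ} (hg : 2 ≤ g) :
    ∑ j : Fin g, max (g / 2) (cycDist g 0 j + 1) = g * (g / 2) + g % 2 + 1 := by
  have hpt : ∀ j ∈ range g, max (g / 2) (cycDist g 0 j + 1) =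
      g / 2 + if j ∈ Icc (g / 2) (g - g / 2) then 1 else 0 := by
    intro j hj
    have := mem_range.1 hj
    simp only [mem_Icc, cycDist, Nat.dist]
    split_ifs <;> omega
  rw [Fin.sum_univ_eq_sum_range (fun j => max (g / 2) (cycDist g 0 j + 1)), sum_congr rfl hpt,
    sum_add_distrib, sum_const, card_range, smul_eq_mul, sum_boole, Nat.cast_id,
    filter_mem_eq_inter, inter_eq_right.2 fun j hj => mem_range.2 (by
      have := (mem_Icc.1 hj).2
      omega), Nat.card_Icc]
  omega

theorem totalEcc_unlGraph (hn : 4 ≤ n) :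
    totalEcc (UnlGraph n (n - 1)) = (n + 1) / 2 * (n - 2) + 3 := by
  rw [totalEcc, Fintype.sum_sum_type]
  simp only [ecc_unlGraph_inl hn, ecc_unlGraph_inr hn, sum_const, card_univ, Fintype.card_fin,
    smul_eq_mul]
  rw [sum_max_cycDist (by omega), show n - (n - 1) = 1 by omega, one_mul]
  obtain ⟨q, hq⟩ : ∃ q, (n - 1) / 2 = q + 1 := ⟨(n - 1) / 2 - 1, by omega⟩
  obtain ⟨r, hr⟩ : ∃ r, (n - 1) % 2 = r := ⟨_, rfl⟩
  rw [hq, hr, show n - 1 = 2 * q + 2 + r by omega, show (n + 1) / 2 = q + 2 by omega,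
    show n - 2 = 2 * q + r + 1 by omega]
  ring

theorem totalEcc_unlGraph_of_even (hn : 4 ≤ n) (he : Even n) :
    totalEcc (UnlGraph n (n - 1)) = n * (n - 2) / 2 + 3 := by
  obtain ⟨k, rfl⟩ := he
  rw [totalEcc_unlGraph hn, show (k + k + 1) / 2 = k by omega,
    show (k + k) * (k + k - 2) = 2 * (k * (k + k - 2)) by ring, Nat.mul_div_cancel_left _ two_pos]

theorem totalEcc_unlGraph_of_odd (hn : 4 ≤ n) (ho : Odd n) :
    totalEcc (UnlGraph n (n - 1)) = n * (n - 1) / 2 + 2 := by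
  obtain ⟨k, rfl⟩ := ho
  obtain ⟨j, rfl⟩ : ∃ j, k = j + 2 := ⟨k - 2, by omega⟩
  rw [totalEcc_unlGraph hn, show (2 * (j + 2) + 1 + 1) / 2 = j + 3 by omega,
    show 2 * (j + 2) + 1 - 2 = 2 * j + 3 by omega, show 2 * (j + 2) + 1 - 1 = 2 * (j + 2) by omega,
    show (2 * (j + 2) + 1) * (2 * (j + 2)) = 2 * ((2 * (j + 2) + 1) * (j + 2)) by ring,
    Nat.mul_div_cancel_left _ two_pos]
  ring

end Unicyclic

theorem stmt18 {V : Type*} [Fintype V] (G : SimpleGraph V) (hG : G.Connected)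
    (n : ℕ) (hn : 5 ≤ n) (hcard : Fintype.card V = n)
    (hcut : {w | IsCutVertex G w}.ncard = 1) :
    totalEcc G ≤ totalEcc (UnlGraph n (n - 1)) ∧
    (Even n → totalEcc (UnlGraph n (n - 1)) = n * (n - 2) / 2 + 3) ∧
    (Odd n → totalEcc (UnlGraph n (n - 1)) = n * (n - 1) / 2 + 2) := by
  obtain ⟨w, hw⟩ := Set.ncard_eq_one.1 hcut
  have hcutw : IsCutVertex G w := (Set.ext_iff.1 hw w).2 rfl
  have huniq : ∀ y, IsCutVertex G y → y = w := fun y hy => (Set.ext_iff.1 hw y).1 hy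
  subst hcard
  refine ⟨?_, totalEcc_unlGraph_of_even (by omega), totalEcc_unlGraph_of_odd (by omega)⟩
  rw [totalEcc_unlGraph (by omega)]
  exact totalEcc_le hG huniq hcutw (by omega)
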